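/- Let K(x) = sin(πx/2)/(πx) for x ≠ 0, K(0) = 1/2, and let (c_i) be the determinantal process on ℤ with kernel K(i-j). Then for distinct integers i, j with |i-j| > 1, Cov(c_i c_{i+1}, c_j c_{j+1}) = E(c_i c_{i+1} c_j c_{j+1}) - E(c_i c_{i+1})·E(c_j c_{j+1}) satisfies |Cov(c_i c_{i+1}, c_j c_{j+1})| ≤ C/(i-j)² for an absolute constant C. -/

import Mathlib

open MeasureTheory Real

/-- The discrete sine kernel at angle `π/2`. -/
noncomputable def sineKernel (x : ℤ) : ℝ :=
  if x = 0 then 1 / 2 else Real.sin (π * x / 2) / (π * x)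

/-!
In `det M = ∑ σ, sign σ ∏ₓ M (σ x) x` the permutations preserving the blocks `{i, i + 1}` and
`{j, j + 1}` contribute exactly the product of the two diagonal block determinants, which are
`E(cᵢcᵢ₊₁)` and `E(cⱼcⱼ₊₁)`. Every other permutation sends some point of one block into the other,
and then, by counting, also some point of the other block back; so its term contains two
off-block entries `K(x - y)`, each `O(1/|i - j|)`, while all entries are at most `1/2`.
-/

open Finset Equiv
open scoped Nat

theorem Fintype.abs_prod_le_sq_mul_pow {ι : Type*} [Fintype ι] [DecidableEq ι] (f : ι → ℝ)
    {x y : ι} (hxy : x ≠ y) {a ε : ℝ} (hx : |f x| ≤ ε) (hy : |f y| ≤ ε) (ha : ∀ z, |f z| ≤ a) :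
    |∏ z, f z| ≤ ε ^ 2 * a ^ (Fintype.card ι - 2) := by
  have hy_mem : y ∈ univ.erase x := mem_erase.2 ⟨hxy.symm, mem_univ y⟩
  have hcard : #((univ.erase x).erase y) = Fintype.card ι - 2 := by
    rw [card_erase_of_mem hy_mem, card_erase_of_mem (mem_univ x), card_univ, Nat.sub_sub]
  have hrest : |∏ z ∈ (univ.erase x).erase y, f z| ≤ a ^ (Fintype.card ι - 2) := by
    rw [abs_prod, ← hcard, ← prod_const]
    exact prod_le_prod (fun _ _ => abs_nonneg _) fun z _ => ha z
  have hε : 0 ≤ ε := (abs_nonneg _).trans hx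
  rw [← mul_prod_erase univ f (mem_univ x), ← mul_prod_erase _ f hy_mem, abs_mul, abs_mul, sq,
    ← mul_assoc]
  gcongr

section Blocks

variable {α β : Type*}

theorem Equiv.Perm.exists_apply_inl_eq_inr [Finite α] [Finite β] {σ : Perm (α ⊕ β)}
    (hσ : ¬Set.MapsTo σ (Set.range Sum.inl) (Set.range Sum.inl)) :
    (∃ i j, σ (.inl i) = .inr j) ∧ ∃ j i, σ (.inr j) = .inl i := by
  have hσ' := mt (Perm.perm_mapsTo_inl_iff_mapsTo_inr σ).2 hσ
  obtain ⟨_, ⟨i, rfl⟩, hi⟩ := not_forall₂.1 hσ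
  obtain ⟨_, ⟨j, rfl⟩, hj⟩ := not_forall₂.1 hσ'
  obtain ⟨j', hj'⟩ : σ (.inl i) ∈ Set.range Sum.inr := Set.compl_range_inl ▸ hi
  obtain ⟨i', hi'⟩ : σ (.inr j) ∈ Set.range Sum.inl := Set.compl_range_inr ▸ hj
  exact ⟨⟨i, j', hj'.symm⟩, ⟨j, i', hi'.symm⟩⟩

variable [Fintype α] [Fintype β]

theorem Matrix.prod_fromBlocks_toBlocks_perm_eq_of_mapsTo {R : Type*} [CommMonoidWithZero R]
    (M : Matrix (α ⊕ β) (α ⊕ β) R) {σ : Perm (α ⊕ β)}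
    (hσ : Set.MapsTo σ (Set.range Sum.inl) (Set.range Sum.inl)) :
    ∏ x, Matrix.fromBlocks M.toBlocks₁₁ 0 0 M.toBlocks₂₂ (σ x) x = ∏ x, M (σ x) x := by
  have hσ' := (Perm.perm_mapsTo_inl_iff_mapsTo_inr σ).1 hσ
  refine prod_congr rfl ?_
  rintro (i | j) -
  · obtain ⟨i', hi'⟩ := hσ ⟨i, rfl⟩
    rw [← hi']; rfl
  · obtain ⟨j', hj'⟩ := hσ' ⟨j, rfl⟩
    rw [← hj']; rfl

variable [DecidableEq α] [DecidableEq β]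

theorem Matrix.abs_det_sub_det_toBlocks₁₁_mul_det_toBlocks₂₂_le (M : Matrix (α ⊕ β) (α ⊕ β) ℝ)
    {a ε : ℝ} (ha : ∀ x y, |M x y| ≤ a) (h₁₂ : ∀ i j, |M.toBlocks₁₂ i j| ≤ ε)
    (h₂₁ : ∀ i j, |M.toBlocks₂₁ i j| ≤ ε) :
    |M.det - M.toBlocks₁₁.det * M.toBlocks₂₂.det| ≤
      (Fintype.card (α ⊕ β))! * (ε ^ 2 * a ^ (Fintype.card (α ⊕ β) - 2)) := by
  set B := Matrix.fromBlocks M.toBlocks₁₁ 0 0 M.toBlocks₂₂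
  have hterm (σ : Perm (α ⊕ β)) :
      |∏ x, M (σ x) x - ∏ x, B (σ x) x| ≤ ε ^ 2 * a ^ (Fintype.card (α ⊕ β) - 2) := by
    by_cases hσ : Set.MapsTo σ (Set.range Sum.inl) (Set.range Sum.inl)
    · rw [prod_fromBlocks_toBlocks_perm_eq_of_mapsTo M hσ, sub_self, abs_zero]
      rcases isEmpty_or_nonempty (α ⊕ β) with _ | ⟨⟨x⟩⟩
      · simp [Fintype.card_eq_zero, sq_nonneg]
      · exact mul_nonneg (sq_nonneg _) (pow_nonneg ((abs_nonneg _).trans (ha x x)) _)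
    · obtain ⟨⟨i, j', hj'⟩, ⟨j, i', hi'⟩⟩ := Perm.exists_apply_inl_eq_inr hσ
      have hB : ∏ x, B (σ x) x = 0 := prod_eq_zero (mem_univ (.inl i)) (by rw [hj']; rfl)
      rw [hB, sub_zero]
      refine Fintype.abs_prod_le_sq_mul_pow _ (Sum.inl_ne_inr (a := i) (b := j)) ?_ ?_
        fun x => ha _ _
      · rw [hj']; exact h₂₁ j' i
      · rw [hi']; exact h₁₂ i' j
  rw [← Matrix.det_fromBlocks_zero₂₁ _ (0 : Matrix α β ℝ), Matrix.det_apply', Matrix.det_apply',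
    ← sum_sub_distrib, ← Fintype.card_perm, ← nsmul_eq_mul, ← Finset.card_univ]
  refine (abs_sum_le_sum_abs _ _).trans (sum_le_card_nsmul _ _ _ fun σ _ => ?_)
  rw [← mul_sub, abs_mul, abs_unit_intCast, one_mul]
  exact hterm σ

end Blocks

theorem Matrix.det_of_union_eq_det_of_sum {α R : Type*} [DecidableEq α] [CommRing R]
    (K : α → α → R) {s t : Finset α} (h : Disjoint s t) :
    (Matrix.of fun a b : ↥(s ∪ t) => K a b).det =
      (Matrix.of fun a b : s ⊕ t => K (Sum.elim (↑) (↑) a) (Sum.elim (↑) (↑) b)).det := by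
  rw [← Matrix.det_submatrix_equiv_self (Equiv.Finset.union s t h)]
  congr 1
  ext (a | a) (b | b) <;> rfl

theorem abs_sineKernel_le {m : ℤ} {r : ℝ} (hr : 0 < r) (hm : r ≤ |(m : ℝ)|) :
    |sineKernel m| ≤ 1 / (π * r) := by
  have hm0 : m ≠ 0 := by rintro rfl; simp at hm; linarith
  rw [sineKernel, if_neg hm0, abs_div, abs_mul, abs_of_pos pi_pos]
  calc |sin (π * m / 2)| / (π * |(m : ℝ)|) ≤ 1 / (π * |(m : ℝ)|) := by
        gcongr; exact abs_sin_le_one _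
    _ ≤ 1 / (π * r) := by gcongr

theorem abs_sineKernel_le_half (m : ℤ) : |sineKernel m| ≤ 1 / 2 := by
  rcases eq_or_ne m 0 with rfl | hm
  · norm_num [sineKernel]
  · refine (abs_sineKernel_le one_pos ?_).trans ?_
    · exact_mod_cast Int.one_le_abs hm
    · gcongr; linarith [pi_gt_three]

theorem abs_sineKernel_le_of_le_two_mul {m d : ℤ} (hd : 0 < d) (h : d ≤ 2 * |m|) :
    |sineKernel m| ≤ 2 / (π * d) := by
  have hd' : (0 : ℝ) < d / 2 := by positivity
  refine (abs_sineKernel_le hd' ?_).trans_eq (by field_simp)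
  rw [← Int.cast_abs]
  have : (d : ℝ) ≤ 2 * (|m| : ℤ) := by exact_mod_cast h
  linarith

theorem abs_sub_le_two_mul_abs_sub {i j x y : ℤ} (hij : 1 < |i - j|)
    (hx : x ∈ ({i, i + 1} : Finset ℤ)) (hy : y ∈ ({j, j + 1} : Finset ℤ)) :
    |i - j| ≤ 2 * |x - y| := by
  simp only [mem_insert, mem_singleton] at hx hy
  grind [abs_cases]

theorem integral_prod_mul_prod_sub_mul_eq_det_sub {Ω α : Type*} [MeasurableSpace Ω]
    [DecidableEq α] (μ : Measure Ω) (c : α → Ω → ℝ) (K : α → α → ℝ)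
    (hcorr : ∀ A : Finset α, ∫ ω, ∏ i ∈ A, c i ω ∂μ = (Matrix.of fun a b : A => K a b).det)
    {s t : Finset α} (hst : Disjoint s t) :
    (∫ ω, (∏ i ∈ s, c i ω) * ∏ i ∈ t, c i ω ∂μ) -
        (∫ ω, ∏ i ∈ s, c i ω ∂μ) * ∫ ω, ∏ i ∈ t, c i ω ∂μ =
      let N := Matrix.of fun a b : s ⊕ t => K (Sum.elim (↑) (↑) a) (Sum.elim (↑) (↑) b)
      N.det - N.toBlocks₁₁.det * N.toBlocks₂₂.det := by
  simp only [← prod_union hst, hcorr, Matrix.det_of_union_eq_det_of_sum K hst]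
  rfl

theorem sine_process_pattern_covariance_decay_general
    {Ω : Type*} [MeasureSpace Ω] (μ : Measure Ω)
    (c : ℤ → Ω → ℝ)
    (hcorr : ∀ A : Finset ℤ,
      (∫ ω, ∏ i ∈ A, c i ω ∂μ) = Matrix.det (Matrix.of fun a b : A => sineKernel (a - b))) :
    ∃ C : ℝ, 0 < C ∧ ∀ i j : ℤ, 1 < |i - j| →
      |(∫ ω, c i ω * c (i + 1) ω * (c j ω * c (j + 1) ω) ∂μ) -
          (∫ ω, c i ω * c (i + 1) ω ∂μ) * (∫ ω, c j ω * c (j + 1) ω ∂μ)| ≤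
        C / ((i : ℝ) - j) ^ 2 := by
  refine ⟨24 / π ^ 2, by positivity, fun i j hij => ?_⟩
  have hst : Disjoint ({i, i + 1} : Finset ℤ) {j, j + 1} := by
    simp only [disjoint_insert_left, disjoint_insert_right, disjoint_singleton, mem_insert,
      mem_singleton]
    grind [abs_cases]
  have hpair (k : ℤ) (ω : Ω) : c k ω * c (k + 1) ω = ∏ x ∈ {k, k + 1}, c x ω :=
    (prod_pair (f := (c · ω)) (by omega)).symm
  have hd : (0 : ℤ) < |i - j| := zero_lt_one.trans hij
  simp only [hpair]
  rw [integral_prod_mul_prod_sub_mul_eq_det_sub μ c (fun x y => sineKernel (x - y)) hcorr hst]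
  refine (Matrix.abs_det_sub_det_toBlocks₁₁_mul_det_toBlocks₂₂_le _ (a := 1 / 2)
    (ε := 2 / (π * |i - j|)) (fun _ _ => abs_sineKernel_le_half _) ?_ ?_).trans_eq ?_
  · rintro ⟨x, hx⟩ ⟨y, hy⟩
    exact abs_sineKernel_le_of_le_two_mul hd (abs_sub_le_two_mul_abs_sub hij hx hy)
  · rintro ⟨y, hy⟩ ⟨x, hx⟩
    exact abs_sineKernel_le_of_le_two_mul hd
      (abs_sub_comm x y ▸ abs_sub_le_two_mul_abs_sub hij hx hy)
  · rw [Fintype.card_sum, Fintype.card_coe, Fintype.card_coe, card_pair (by omega),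
      card_pair (by omega)]
    push_cast
    rw [div_pow, mul_pow, sq_abs]
    field_simp
    norm_num [Nat.factorial]

theorem sine_process_pattern_covariance_decay
    {Ω : Type*} [MeasureSpace Ω] (μ : Measure Ω) [IsProbabilityMeasure μ]
    (c : ℤ → Ω → ℝ) (hc01 : ∀ i ω, c i ω = 0 ∨ c i ω = 1)
    (hmeas : ∀ i, Measurable (c i))
    (hcorr : ∀ A : Finset ℤ,
      (∫ ω, ∏ i ∈ A, c i ω ∂μ) = Matrix.det (Matrix.of fun a b : A => sineKernel (a - b))) :
    ∃ C : ℝ, 0 < C ∧ ∀ i j : ℤ, 1 < |i - j| →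
      |(∫ ω, c i ω * c (i + 1) ω * (c j ω * c (j + 1) ω) ∂μ) -
          (∫ ω, c i ω * c (i + 1) ω ∂μ) * (∫ ω, c j ω * c (j + 1) ω ∂μ)| ≤
        C / ((i : ℝ) - j) ^ 2 :=
  sine_process_pattern_covariance_decay_general μ c hcorr
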